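/- arXiv:1607.01369 — 3 statements merged into one kernel-verified Lean document; each statement's English description precedes it below -/
import Mathlib

section
/- Let x = (x_1,...,x_k) be a vector of distinct real numbers, f a strictly increasing real function, and σ the cyclic permutation sending i to i+1 (mod k). Let α be the minimum gap between consecutive order statistics of x and β the minimum gap between consecutive order statistics of f applied to x. Then ⟨x, f(x)⟩ − ⟨x, f(σ(x))⟩ ≥ (k−1)αβ, where f(σ(x)) denotes the vector with i-th entry f(x_{σ(i)}). -/
/-!
Let `r` be the rank function of `x`. Consecutive order statistics of `x` and of `f ∘ x` are at
least `α` and `β` apart, so `x - α r` and `f ∘ x - β r` are still ordered like `x`, and by the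
rearrangement inequality they contribute nonnegatively to `∑ xᵢ (f xᵢ - f x_{σ i})`. What is left
is `α β ∑ rᵢ (rᵢ - r_{σ i}) = (α β / 2) ∑ (rᵢ - r_{σ i})²`, and the integers `rᵢ - r_{σ i}` are
the steps of a closed walk through `0` and `k - 1`, so their absolute values already sum to at
least `2 (k - 1)`.
-/

open Finset

section Rearrangement

variable {ι : Type*} [Fintype ι]

def permDefect (π : Equiv.Perm ι) (a b : ι → ℝ) : ℝ := ∑ i, a i * (b i - b (π i))

theorem Monovary.permDefect_nonneg {a b : ι → ℝ} (h : Monovary a b) (π : Equiv.Perm ι) :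
    0 ≤ permDefect π a b := by
  simpa [permDefect, mul_sub, sum_sub_distrib] using h.sum_mul_comp_perm_le_sum_mul (σ := π)

theorem permDefect_eq_add_sub_smul (π : Equiv.Perm ι) (a b r : ι → ℝ) (c : ℝ) :
    permDefect π a b = permDefect π a (b - c • r) + c * permDefect π a r := by
  simp only [permDefect, mul_sum, ← sum_add_distrib]
  exact sum_congr rfl fun i _ => by simp only [Pi.sub_apply, Pi.smul_apply, smul_eq_mul]; ring

theorem permDefect_eq_sub_smul_add (π : Equiv.Perm ι) (a r : ι → ℝ) (c : ℝ) :
    permDefect π a r = permDefect π (a - c • r) r + c * permDefect π r r := by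
  simp only [permDefect, mul_sum, ← sum_add_distrib]
  exact sum_congr rfl fun i _ => by simp only [Pi.sub_apply, Pi.smul_apply, smul_eq_mul]; ring

theorem mul_mul_permDefect_le {a b r : ι → ℝ} {α β : ℝ} (hβ : 0 ≤ β)
    (hb : Monovary a (b - β • r)) (ha : Monovary (a - α • r) r) (π : Equiv.Perm ι) :
    α * β * permDefect π r r ≤ permDefect π a b := by
  rw [permDefect_eq_add_sub_smul π a b r β, permDefect_eq_sub_smul_add π a r α]
  nlinarith [hb.permDefect_nonneg π, ha.permDefect_nonneg π]

theorem two_mul_permDefect_self (π : Equiv.Perm ι) (r : ι → ℝ) :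
    2 * permDefect π r r = ∑ i, (r i - r (π i)) ^ 2 := by
  have h : ∑ i, (r (π i) ^ 2 - r i ^ 2) = 0 := by
    rw [sum_sub_distrib, Equiv.sum_comp π fun i => r i ^ 2, sub_self]
  rw [permDefect, mul_sum, ← add_zero (∑ i, 2 * _), ← h, ← sum_add_distrib]
  exact sum_congr rfl fun i _ => by ring

end Rearrangement

theorem two_mul_dist_le_sum_dist_of_eq {α : Type*} [PseudoMetricSpace α] (f : ℕ → α) {m n : ℕ}
    (hmn : m ≤ n) (hn : f n = f 0) :
    2 * dist (f 0) (f m) ≤ ∑ i ∈ range n, dist (f i) (f (i + 1)) := by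
  rw [range_eq_Ico, ← sum_Ico_consecutive _ (Nat.zero_le m) hmn]
  have h₁ := dist_le_Ico_sum_dist f (Nat.zero_le m)
  have h₂ := dist_le_Ico_sum_dist f hmn
  rw [hn, dist_comm] at h₂
  linarith

open Fin.NatCast in
theorem two_mul_dist_le_sum_dist_add_one {α : Type*} [PseudoMetricSpace α] {k : ℕ} [NeZero k]
    (g : Fin k → α) (a b : Fin k) :
    2 * dist (g a) (g b) ≤ ∑ i, dist (g i) (g (i + 1)) := by
  have hwalk := two_mul_dist_le_sum_dist_of_eq (fun n : ℕ => g (a + n)) (b - a).is_lt.le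
    (by simp)
  rw [← Fin.sum_univ_eq_sum_range] at hwalk
  rw [← Equiv.sum_comp (Equiv.addLeft a)]
  simpa [Fin.cast_val_eq_self, add_assoc] using hwalk

theorem abs_natCast_sub_le_sq (m n : ℕ) : |(m : ℝ) - n| ≤ ((m : ℝ) - n) ^ 2 := by
  have h : |(m : ℤ) - n| ≤ ((m : ℤ) - n) ^ 2 := by
    rw [← Int.natCast_natAbs]
    exact Int.natAbs_le_self_sq _
  exact_mod_cast h

theorem sub_one_le_permDefect_val {k : ℕ} [NeZero k] (σ : Equiv.Perm (Fin k))
    (hσ : ∀ i, σ i = i + 1) (r : Equiv.Perm (Fin k)) :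
    (k : ℝ) - 1 ≤ permDefect σ (fun i => ((r i : ℕ) : ℝ)) (fun i => ((r i : ℕ) : ℝ)) := by
  have hk := NeZero.pos k
  have hwalk := two_mul_dist_le_sum_dist_add_one (fun i => ((r i : ℕ) : ℝ))
    (r.symm 0) (r.symm ⟨k - 1, by omega⟩)
  have hsq : ∑ i, dist ((r i : ℕ) : ℝ) ((r (i + 1) : ℕ) : ℝ)
      ≤ ∑ i, (((r i : ℕ) : ℝ) - ((r (σ i) : ℕ) : ℝ)) ^ 2 :=
    sum_le_sum fun i _ => by rw [hσ, Real.dist_eq]; exact abs_natCast_sub_le_sq _ _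
  have hend : dist ((r (r.symm 0) : ℕ) : ℝ) ((r (r.symm ⟨k - 1, by omega⟩) : ℕ) : ℝ) = k - 1 := by
    have : (1 : ℝ) ≤ k := mod_cast hk
    simp [Real.dist_eq, Nat.cast_sub hk, abs_sub_comm, this]
  rw [hend] at hwalk
  linarith [two_mul_permDefect_self σ fun i => ((r i : ℕ) : ℝ)]

theorem Monotone.monotone_sub_mul_val {k : ℕ} {u : Fin k → ℝ} {α : ℝ} (hu : Monotone u)
    (hgap : ∀ i j, i ≠ j → α ≤ |u i - u j|) : Monotone fun q : Fin k => u q - α * (q : ℕ) := by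
  refine (monotone_iff_forall_covBy _).2 fun a b hab => ?_
  have hsucc : (b : ℕ) = a + 1 := (Nat.covBy_iff_add_one_eq.1 (Fin.covBy_iff.1 hab)).symm
  have hα := hgap b a hab.lt.ne'
  rw [abs_of_nonneg (sub_nonneg.2 (hu hab.le))] at hα
  simp only [hsucc, Nat.cast_add, Nat.cast_one]
  linarith

theorem cycle_inner_product_gap_general (k : ℕ) [NeZero k]
    (x : Fin k → ℝ)
    (f : ℝ → ℝ) (hf : StrictMono f)
    (σ : Equiv.Perm (Fin k)) (hσ : ∀ i, σ i = i + 1)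
    (α β : ℝ)
    (hα : IsLeast {d : ℝ | ∃ i j : Fin k, i ≠ j ∧ d = |x i - x j|} α)
    (hβ : IsLeast {d : ℝ | ∃ i j : Fin k, i ≠ j ∧ d = |f (x i) - f (x j)|} β) :
    (∑ i, x i * f (x i)) - ∑ i, x i * f (x (σ i)) ≥ ((k : ℝ) - 1) * α * β := by
  set τ := Tuple.sort x
  set rank : Fin k → ℝ := fun i => ((τ.symm i : ℕ) : ℝ)
  have hα₀ : 0 ≤ α := by obtain ⟨i, j, -, rfl⟩ := hα.1; exact abs_nonneg _
  have hβ₀ : 0 ≤ β := by obtain ⟨i, j, -, rfl⟩ := hβ.1; exact abs_nonneg _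
  have hsorted : Monotone (x ∘ τ) := Tuple.monotone_sort x
  have hgap_x := hsorted.monotone_sub_mul_val
    fun i j hij => hα.2 ⟨τ i, τ j, τ.injective.ne hij, rfl⟩
  have hgap_fx := (hf.monotone.comp hsorted).monotone_sub_mul_val
    fun i j hij => hβ.2 ⟨τ i, τ j, τ.injective.ne hij, rfl⟩
  have hmonovary_fx : Monovary x (f ∘ x - β • rank) := by
    convert (hsorted.monovary hgap_fx).comp_right τ.symm using 1 <;> ext i <;> simp [rank]
  have hmonovary_x : Monovary (x - α • rank) rank := by
    convert (hgap_x.monovary fun a b h => (Nat.cast_le.2 h : ((a : ℕ) : ℝ) ≤ b)).comp_right τ.symm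
      using 1 <;> ext i <;> simp [rank]
  calc (∑ i, x i * f (x i)) - ∑ i, x i * f (x (σ i)) = permDefect σ x (f ∘ x) := by
        simp [permDefect, mul_sub, sum_sub_distrib]
    _ ≥ α * β * permDefect σ rank rank := mul_mul_permDefect_le hβ₀ hmonovary_fx hmonovary_x σ
    _ ≥ α * β * ((k : ℝ) - 1) :=
        mul_le_mul_of_nonneg_left (sub_one_le_permDefect_val σ hσ τ.symm) (by positivity)
    _ = ((k : ℝ) - 1) * α * β := by ring

/-- Proposition 1 (cycle lemma): for a vector `x` of distinct reals, a strictly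
increasing `f`, and the cyclic permutation `σ : i ↦ i + 1 (mod k)`,
`⟨x, f(x)⟩ − ⟨x, f(σ(x))⟩ ≥ (k−1)αβ`, where `α` is the minimum gap between
(consecutive order statistics of) the entries of `x` and `β` the analogous
quantity for `f` applied to the entries of `x`. -/
theorem cycle_inner_product_gap (k : ℕ) [NeZero k] (hk : 2 ≤ k)
    (x : Fin k → ℝ) (hx : Function.Injective x)
    (f : ℝ → ℝ) (hf : StrictMono f)
    (σ : Equiv.Perm (Fin k)) (hσ : ∀ i, σ i = i + 1)
    (α β : ℝ)
    (hα : IsLeast {d : ℝ | ∃ i j : Fin k, i ≠ j ∧ d = |x i - x j|} α)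
    (hβ : IsLeast {d : ℝ | ∃ i j : Fin k, i ≠ j ∧ d = |f (x i) - f (x j)|} β) :
    (∑ i, x i * f (x i)) - ∑ i, x i * f (x (σ i)) ≥ ((k : ℝ) - 1) * α * β :=
  cycle_inner_product_gap_general k x f hf σ hσ α β hα hβ
end

section
/- Let x = (x_1,...,x_k) be a vector of distinct real numbers, f strictly increasing, and σ the cyclic permutation i ↦ i+1 (mod k). Suppose there exists an index i such that α_i := min_{j≠i}|x_i − x_j| > 0 and β_i := min_{j≠i}|f(x_i) − f(x_j)| > 0. Then ⟨x, f(x)⟩ − ⟨x, f(σ(x))⟩ ≥ α_i β_i. -/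
/-!
Write `y = f ∘ x` and let `S` be `{j | x i ≤ x j}` or `{j | x i < x j}`, whichever is a proper
nonempty set. Entries of `x` inside `S` exceed those outside by at least `α`, so lowering `x` by
`α` on `S` keeps it monovarying with `y`, and the rearrangement inequality bounds the gap below
by `α ∑_{j ∈ S} (y j - y (σ j))`. That sum is `∑_{S \ σS} y - ∑_{σS \ S} y`, over two sets of
equal size that are nonempty because a `k`-cycle leaves no proper nonempty set invariant; as `y`
on `S` exceeds `y` off `S` by at least `β`, the sum is at least `β`.
-/

open Finset Equiv

section Rearrangement

variable {ι : Type*} [DecidableEq ι]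

theorem Monovary.sub_ite_mem_of_gap {x y : ι → ℝ} (hxy : Monovary x y) {S : Finset ι}
    {α : ℝ} (hα : 0 ≤ α) (hgap : ∀ j ∉ S, ∀ l ∈ S, x j + α ≤ x l) :
    Monovary (fun j => x j - if j ∈ S then α else 0) y := by
  intro j l hjl
  have hx := hxy hjl
  by_cases hj : j ∈ S <;> by_cases hl : l ∈ S <;> simp only [hj, hl, if_true, if_false]
  all_goals first | linarith | linarith [hgap _ hl _ hj] | linarith [hgap _ hj _ hl]

theorem Monovary.mul_sum_sub_comp_perm_le_of_gap [Fintype ι] (σ : Perm ι) {x y : ι → ℝ}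
    (hxy : Monovary x y) {S : Finset ι} {α : ℝ} (hα : 0 ≤ α)
    (hgap : ∀ j ∉ S, ∀ l ∈ S, x j + α ≤ x l) :
    α * ∑ j ∈ S, (y j - y (σ j)) ≤ ∑ j, x j * y j - ∑ j, x j * y (σ j) := by
  set u : ι → ℝ := fun j => x j - if j ∈ S then α else 0
  have hsplit : ∑ j, x j * y j - ∑ j, x j * y (σ j)
      = (∑ j, u j * y j - ∑ j, u j * y (σ j)) + α * ∑ j ∈ S, (y j - y (σ j)) := by
    rw [← univ_inter S, ← sum_ite_mem, mul_sum]
    simp only [u, ← sum_sub_distrib, ← sum_add_distrib]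
    refine sum_congr rfl fun j _ => ?_
    split_ifs <;> ring
  have := (hxy.sub_ite_mem_of_gap hα hgap).sum_mul_comp_perm_le_sum_mul (σ := σ)
  linarith

theorem le_sum_sub_comp_perm_of_image_ne (σ : Perm ι) (y : ι → ℝ) {S : Finset ι}
    (hS : S.image σ ≠ S) {v β : ℝ} (hβ : 0 ≤ β) (hin : ∀ j ∈ S, v + β ≤ y j)
    (hout : ∀ j ∉ S, y j ≤ v) :
    β ≤ ∑ j ∈ S, (y j - y (σ j)) := by
  set T := S.image σ
  have hcard : T.card = S.card := card_image_of_injective S σ.injective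
  have hsum : ∑ j ∈ S, (y j - y (σ j)) = ∑ j ∈ S \ T, y j - ∑ j ∈ T \ S, y j := by
    rw [sum_sdiff_sub_sum_sdiff, sum_image fun a _ b _ h => σ.injective h, sum_sub_distrib]
  have hlow : (S \ T).card • (v + β) ≤ ∑ j ∈ S \ T, y j :=
    card_nsmul_le_sum _ _ _ fun j hj => hin j (mem_sdiff.1 hj).1
  have hup : ∑ j ∈ T \ S, y j ≤ (S \ T).card • v := by
    rw [← card_sdiff_comm hcard]
    exact sum_le_card_nsmul _ _ _ fun j hj => hout j (mem_sdiff.1 hj).2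
  have hpos : (1 : ℝ) ≤ (S \ T).card := by
    have : (S \ T).Nonempty := by
      rw [sdiff_nonempty]
      exact fun hST => hS (eq_of_subset_of_card_le hST hcard.le).symm
    exact_mod_cast this.card_pos
  rw [nsmul_eq_mul] at hlow hup
  nlinarith

end Rearrangement

open Fin.CommRing in
theorem Finset.mem_of_image_add_one_eq_self {k : ℕ} [NeZero k] {S : Finset (Fin k)}
    (hS : S.image (· + 1) = S) {j : Fin k} (hj : j ∈ S) (l : Fin k) : l ∈ S := by
  have hadd : ∀ n : ℕ, j + n ∈ S := by
    intro n
    induction n with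
    | zero => simpa using hj
    | succ n ih =>
      rw [← hS, Nat.cast_succ, ← add_assoc]
      exact mem_image_of_mem _ ih
  simpa using hadd (l - j).val

theorem Monovary.mul_le_sum_mul_sub_sum_mul_comp_cycle {k : ℕ} [NeZero k] (σ : Perm (Fin k))
    (hσ : ∀ i, σ i = i + 1) {x y : Fin k → ℝ} (hxy : Monovary x y) {S : Finset (Fin k)}
    {a b : Fin k} (ha : a ∈ S) (hb : b ∉ S) {α β v : ℝ} (hα : 0 ≤ α) (hβ : 0 ≤ β)
    (hgap : ∀ j ∉ S, ∀ l ∈ S, x j + α ≤ x l) (hin : ∀ j ∈ S, v + β ≤ y j)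
    (hout : ∀ j ∉ S, y j ≤ v) :
    α * β ≤ ∑ j, x j * y j - ∑ j, x j * y (σ j) := by
  have himage : S.image σ ≠ S := by
    rw [show ⇑σ = (· + 1) from funext hσ]
    exact fun h => hb (mem_of_image_add_one_eq_self h ha b)
  calc α * β ≤ α * ∑ j ∈ S, (y j - y (σ j)) :=
        mul_le_mul_of_nonneg_left (le_sum_sub_comp_perm_of_image_ne σ y himage hβ hin hout) hα
    _ ≤ _ := hxy.mul_sum_sub_comp_perm_le_of_gap σ hα hgap

theorem add_le_of_lt_of_mem_lowerBounds {ι : Type*} {z : ι → ℝ} {i : ι} {m : ℝ}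
    (hm : m ∈ lowerBounds {d | ∃ j, j ≠ i ∧ d = |z i - z j|}) ⦃j l : ι⦄ (hjl : z j < z l)
    (hi : j = i ∨ l = i) : z j + m ≤ z l := by
  rcases hi with rfl | rfl
  · have := hm ⟨l, fun h => hjl.ne (congrArg z h).symm, rfl⟩
    rw [abs_sub_comm, abs_of_pos (sub_pos.2 hjl)] at this
    linarith
  · have := hm ⟨j, fun h => hjl.ne (congrArg z h), rfl⟩
    rw [abs_of_pos (sub_pos.2 hjl)] at this
    linarith

theorem cycle_inner_product_gap_single_general (k : ℕ) [NeZero k]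
    (x : Fin k → ℝ) (hx : Function.Injective x)
    (f : ℝ → ℝ) (hf : StrictMono f)
    (σ : Equiv.Perm (Fin k)) (hσ : ∀ i, σ i = i + 1)
    (i : Fin k) (αi βi : ℝ)
    (hα : IsLeast {d : ℝ | ∃ j : Fin k, j ≠ i ∧ d = |x i - x j|} αi)
    (hβ : IsLeast {d : ℝ | ∃ j : Fin k, j ≠ i ∧ d = |f (x i) - f (x j)|} βi) :
    (∑ j, x j * f (x j)) - ∑ j, x j * f (x (σ j)) ≥ αi * βi := by
  have hxf : Monovary x (fun j => f (x j)) := fun j l h => (hf.lt_iff_lt.1 h).le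
  have hα0 : 0 ≤ αi := by obtain ⟨j, -, rfl⟩ := hα.1; exact abs_nonneg _
  have hβ0 : 0 ≤ βi := by obtain ⟨j, -, rfl⟩ := hβ.1; exact abs_nonneg _
  have hxgap := add_le_of_lt_of_mem_lowerBounds hα.2
  have hygap := add_le_of_lt_of_mem_lowerBounds (z := fun j => f (x j)) hβ.2
  by_cases hlow : ∃ j, x j < x i
  · obtain ⟨j, hj⟩ := hlow
    refine hxf.mul_le_sum_mul_sub_sum_mul_comp_cycle σ hσ (S := {l | x i ≤ x l})
      (a := i) (b := j) (v := f (x i) - βi) (by simp) (by simpa using hj) hα0 hβ0 ?_ ?_ ?_ <;>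
      simp only [mem_filter_univ, not_le]
    · exact fun l hl m hm => (hxgap hl (Or.inr rfl)).trans hm
    · exact fun l hl => by linarith [hf.monotone hl]
    · exact fun l hl => by linarith [hygap (hf hl) (Or.inr rfl)]
  · push Not at hlow
    obtain ⟨j, hji, -⟩ := hα.1
    have hj : x i < x j := (hlow j).lt_of_ne (hx.ne hji.symm)
    refine hxf.mul_le_sum_mul_sub_sum_mul_comp_cycle σ hσ (S := {l | x i < x l})
      (a := j) (b := i) (v := f (x i)) (by simpa using hj) (by simp) hα0 hβ0 ?_ ?_ ?_ <;>
      simp only [mem_filter_univ, not_lt]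
    · exact fun l hl m hm => (add_le_add_left hl _).trans (hxgap hm (Or.inl rfl))
    · exact fun l hl => hygap (hf hl) (Or.inl rfl)
    · exact fun l hl => hf.monotone hl

/-- Remark 3: if for a fixed index `i` the entry `x i` is separated from all
other entries (both before and after applying the strictly increasing `f`),
then `⟨x, f(x)⟩ − ⟨x, f(σ(x))⟩ ≥ α_i β_i` for the cyclic permutation `σ`. -/
theorem cycle_inner_product_gap_single (k : ℕ) [NeZero k] (hk : 2 ≤ k)
    (x : Fin k → ℝ) (hx : Function.Injective x)
    (f : ℝ → ℝ) (hf : StrictMono f)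
    (σ : Equiv.Perm (Fin k)) (hσ : ∀ i, σ i = i + 1)
    (i : Fin k) (αi βi : ℝ)
    (hα : IsLeast {d : ℝ | ∃ j : Fin k, j ≠ i ∧ d = |x i - x j|} αi)
    (hβ : IsLeast {d : ℝ | ∃ j : Fin k, j ≠ i ∧ d = |f (x i) - f (x j)|} βi)
    (hαpos : 0 < αi) (hβpos : 0 < βi) :
    (∑ j, x j * f (x j)) - ∑ j, x j * f (x (σ j)) ≥ αi * βi :=
  cycle_inner_product_gap_single_general k x hx f hf σ hσ i αi βi hα hβ
end

section
/- Given nonnegative integers {ε_{k,ℓ}}_{k,ℓ=1}^K with row and column sums u_k = Σ_ℓ ε_{k,ℓ} = Σ_ℓ ε_{ℓ,k}, the number of permutations σ of U (with the block structure above) satisfying ε_{k,ℓ}(σ) = ε_{k,ℓ} for all k, ℓ, counted up to within-block relabeling (i.e., number of distinct induced cross-block assignment patterns), is at most Π_k u_k^{u_k − ε_{k,k}} = exp(Σ_k (u_k − ε_{k,k}) log u_k). -/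
/-!
Any two patterns `g, g₀ : U → κ` with the same block counts `ε_{k,l}` differ by a block-preserving
relabelling: there is a permutation `π` with `b ∘ π = b` and `g ∘ π = g₀`. Such a `g` is determined
by the values of `π` at the points `w` that `g₀` sends out of their own block, since every point
that `g` moves is `π w` for such a `w`, and every other point `v` has `g v = b v`. In block `k`
there are `u_k - ε_{k,k}` such points and `π` maps each of them into block `k`, which gives at most
`∏ₖ u_k ^ (u_k - ε_{k,k})` patterns.
-/

open Finset

section BlockPatterns

variable {U κ : Type*}

/-- `ε_{k,l}(g)`; for a permutation `σ` the paper's `ε_{k,l}(σ)` is `blockCount b (b ∘ σ) k l`. -/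
def blockCount [Fintype U] [DecidableEq κ] (b g : U → κ) (k l : κ) : ℕ :=
  #{v | b v = k ∧ g v = l}

theorem card_filter_and_ne_eq_sub_blockCount [Fintype U] [DecidableEq κ] (b g : U → κ) (k : κ) :
    #{v | b v = k ∧ g v ≠ k} = #{v | b v = k} - blockCount b g k k := by
  rw [blockCount, ← card_filter_add_card_filter_not (s := {v | b v = k}) (fun v => g v = k)]
  simp only [filter_filter, ne_eq]
  omega

theorem exists_perm_of_blockCount_eq [Fintype U] [DecidableEq κ] {b g g₀ : U → κ}
    (h : ∀ k l, blockCount b g k l = blockCount b g₀ k l) :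
    ∃ π : Equiv.Perm U, (∀ v, b (π v) = b v) ∧ ∀ v, g (π v) = g₀ v := by
  have hfiber : ∀ c : κ × κ,
      Fintype.card {v // (b v, g₀ v) = c} = Fintype.card {v // (b v, g v) = c} := by
    rintro ⟨k, l⟩
    simp only [Fintype.card_subtype, Prod.mk.injEq]
    exact (h k l).symm
  let π : Equiv.Perm U := Equiv.ofFiberEquiv fun c => Fintype.equivOfCardEq (hfiber c)
  have hπ v : (b (π v), g (π v)) = (b v, g₀ v) :=
    Equiv.ofFiberEquiv_map (g := fun v => (b v, g v)) _ v
  exact ⟨π, fun v => congrArg Prod.fst (hπ v), fun v => congrArg Prod.snd (hπ v)⟩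

section Relabel

variable {b g g' g₀ : U → κ} {π π' : Equiv.Perm U}

theorem apply_eq_of_apply_ne (hb : ∀ v, b (π v) = b v) (hg : ∀ v, g (π v) = g₀ v)
    (hg' : ∀ v, g' (π' v) = g₀ v) (hπ : ∀ w, g₀ w ≠ b w → π w = π' w) {v : U}
    (hv : g v ≠ b v) : g v = g' v := by
  obtain ⟨w, rfl⟩ := π.surjective v
  have hw : g₀ w ≠ b w := by rwa [← hg, ← hb]
  rw [hg, hπ w hw, hg']

theorem eq_of_perm_eq_on_moved (hb : ∀ v, b (π v) = b v) (hg : ∀ v, g (π v) = g₀ v)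
    (hb' : ∀ v, b (π' v) = b v) (hg' : ∀ v, g' (π' v) = g₀ v)
    (hπ : ∀ w, g₀ w ≠ b w → π w = π' w) : g = g' := by
  funext v
  by_cases hv : g v = b v
  · by_cases hv' : g' v = b v
    · rw [hv, hv']
    · exact (apply_eq_of_apply_ne hb' hg' hg (fun w hw => (hπ w hw).symm) hv').symm
  · exact apply_eq_of_apply_ne hb hg hg' hπ hv

end Relabel

theorem card_blockCount_eq_le [Fintype U] [Fintype κ] [DecidableEq κ] (b : U → κ)
    (E : κ → κ → ℕ) :
    Nat.card {g : U → κ // ∀ k l, blockCount b g k l = E k l} ≤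
      ∏ k, #{v | b v = k} ^ (#{v | b v = k} - E k k) := by
  obtain hempty | ⟨g₀, hg₀⟩ :=
    isEmpty_or_nonempty {g : U → κ // ∀ k l, blockCount b g k l = E k l}
  · simp
  choose π hπb hπg using fun g : {g : U → κ // ∀ k l, blockCount b g k l = E k l} =>
    exists_perm_of_blockCount_eq fun k l => (g.2 k l).trans (hg₀ k l).symm
  let encode (g : {g : U → κ // ∀ k l, blockCount b g k l = E k l})
      (k : κ) (w : {v // b v = k ∧ g₀ v ≠ k}) : {v // b v = k} :=
    ⟨π g w, (hπb g w).trans w.2.1⟩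
  have encode_injective : Function.Injective encode := by
    intro g g' h
    refine Subtype.ext (eq_of_perm_eq_on_moved (hπb g) (hπg g) (hπb g') (hπg g') fun w hw => ?_)
    exact congrArg Subtype.val (congrFun (congrFun h (b w)) ⟨w, rfl, hw⟩)
  calc _ ≤ Nat.card (∀ k, {v // b v = k ∧ g₀ v ≠ k} → {v // b v = k}) :=
        Nat.card_le_card_of_injective encode encode_injective
    _ = _ := by
      classical
      rw [Nat.card_eq_fintype_card, Fintype.card_pi]
      refine prod_congr rfl fun k _ => ?_
      rw [Fintype.card_fun, Fintype.card_subtype, Fintype.card_subtype,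
        card_filter_and_ne_eq_sub_blockCount, hg₀]

end BlockPatterns

theorem pattern_count_bound_general (U : Type*) [Fintype U] (K : ℕ)
    (b : U → Fin K) (E : Fin K → Fin K → ℕ) :
    Nat.card {g : U → Fin K // ∃ σ : Equiv.Perm U,
        (∀ k l, (Finset.univ.filter (fun v => b v = k ∧ b (σ v) = l)).card = E k l) ∧
        g = b ∘ σ}
      ≤ ∏ k, ((Finset.univ.filter (fun v => b v = k)).card)
          ^ ((Finset.univ.filter (fun v => b v = k)).card - E k k) := by
  have hcount : ∀ g : U → Fin K, (∃ σ : Equiv.Perm U,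
      (∀ k l, (Finset.univ.filter (fun v => b v = k ∧ b (σ v) = l)).card = E k l) ∧ g = b ∘ σ) →
      ∀ k l, blockCount b g k l = E k l := by
    rintro _ ⟨σ, hσ, rfl⟩
    exact hσ
  exact (Nat.card_le_card_of_injective _ (Subtype.impEmbedding _ _ hcount).injective).trans
    (card_blockCount_eq_le b E)

/-- Bound (bnd2): given target misassignment counts `E_{k,ℓ}` with row and
column sums `u_k`, the number of cross-block assignment patterns `b ∘ σ`
(i.e., permutations `σ` with `ε_{k,ℓ}(σ) = E_{k,ℓ}` counted up to within-block
relabeling) is at most `∏_k u_k^{u_k − E_{k,k}}`. -/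
theorem pattern_count_bound (U : Type*) [Fintype U] [DecidableEq U] (K : ℕ)
    (b : U → Fin K) (E : Fin K → Fin K → ℕ)
    (hrow : ∀ k, ∑ l, E k l = (Finset.univ.filter (fun v => b v = k)).card)
    (hcol : ∀ k, ∑ l, E l k = (Finset.univ.filter (fun v => b v = k)).card) :
    Nat.card {g : U → Fin K // ∃ σ : Equiv.Perm U,
        (∀ k l, (Finset.univ.filter (fun v => b v = k ∧ b (σ v) = l)).card = E k l) ∧
        g = b ∘ σ}
      ≤ ∏ k, ((Finset.univ.filter (fun v => b v = k)).card)
          ^ ((Finset.univ.filter (fun v => b v = k)).card - E k k) :=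
  pattern_count_bound_general U K b E
end
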